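/- arXiv:2011.05610 — 2 statements merged into one kernel-verified Lean document; each statement's English description precedes it below -/
import Mathlib

section
/- Correctness of occurrence listing via φ and PLCP: a text position p' is the start of an occurrence of P[i..j] in T if and only if, starting from any one occurrence start p with T[p..p+j−i] = P[i..j] and repeatedly applying φ (or φ⁻¹), all positions visited while PLCP (respectively LCP at the successor rank) remains ≥ j−i+1 are exactly the occurrence starts; formally, the set {SA[k] : lcp of T[SA[k]..] with P[i..j] has length ≥ j−i+1} is an interval of ranks [l, r] in the suffix array, and Algorithm 1 outputs exactly {SA[k] : l ≤ k ≤ r}. -/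
/-- `lce T a b` = length of the longest common prefix of the suffixes
`T[a..]` and `T[b..]`. -/
noncomputable def lce {α : Type*} (T : List α) (a b : ℕ) : ℕ :=
  letI := Classical.decPred (fun ℓ : ℕ => (T.drop a).take ℓ = (T.drop b).take ℓ)
  Nat.findGreatest (fun ℓ : ℕ => (T.drop a).take ℓ = (T.drop b).take ℓ) T.length

/-- The LCP array (`lcpArr T SA 0 = 0`). -/
noncomputable def lcpArr {α : Type*} (T : List α) (SA : ℕ → ℕ) (k : ℕ) : ℕ :=
  if k = 0 then 0 else lce T (SA (k - 1)) (SA k)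

/-- The permuted LCP array: `PLCP[p] = LCP[ISA[p]]`. -/
noncomputable def plcp {α : Type*} (T : List α) (SA ISA : ℕ → ℕ) (p : ℕ) : ℕ :=
  lcpArr T SA (ISA p)

/-- `φ(p) = SA[ISA[p] - 1]`. -/
def phi (SA ISA : ℕ → ℕ) (p : ℕ) : ℕ := SA (ISA p - 1)

/-- `φ⁻¹(p) = SA[ISA[p] + 1]`, with the out-of-range value `n = |T|`
playing the role of `NULL`. -/
def phiInv {α : Type*} (T : List α) (SA ISA : ℕ → ℕ) (p : ℕ) : ℕ :=
  if ISA p + 1 < T.length then SA (ISA p + 1) else T.length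

/-!
Since the suffixes are sorted and `List.take m` is monotone for the lexicographic order, the
ranks whose suffix starts with a given pattern form an interval `[l, r]` of the suffix array. Two
neighbouring ranks both lie in this interval exactly when their LCP value is at least the pattern
length `m`, so inside `[l, r + 1]` the LCP is `≥ m` precisely on `(l, r]`. Starting from any
occurrence, `φ` moves one rank down and `φ⁻¹` one rank up, so the two walks of Algorithm 1 sweep
out exactly `[l, r]`.
-/

theorem List.take_monotone {α : Type*} [LinearOrder α] (m : ℕ) :
    Monotone (List.take m : List α → List α) := by
  induction m with
  | zero => intro _ _ _; simp
  | succ m ih =>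
    intro a b hab
    rcases hab.lt_or_eq with hlt | rfl
    · change List.Lex (· < ·) a b at hlt
      cases hlt with
      | nil => exact le_of_lt List.Lex.nil
      | cons h => exact List.cons_le_cons _ (ih (le_of_lt h))
      | rel h => exact le_of_lt (List.Lex.rel h)
    · exact le_rfl

section Lcp

variable {α : Type*} (T : List α)

theorem le_lce_iff {a b m : ℕ} (hm : m ≤ T.length) :
    m ≤ lce T a b ↔ (T.drop a).take m = (T.drop b).take m := by
  constructor
  · intro h
    have hspec : (T.drop a).take (lce T a b) = (T.drop b).take (lce T a b) := by
      unfold lce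
      convert Nat.findGreatest_spec (P := fun ℓ => (T.drop a).take ℓ = (T.drop b).take ℓ)
        (Nat.zero_le T.length) rfl using 3
    rw [← min_eq_left h, ← List.take_take, hspec, List.take_take]
  · intro h
    unfold lce
    convert Nat.le_findGreatest (P := fun ℓ => (T.drop a).take ℓ = (T.drop b).take ℓ) hm h
      using 2

theorem le_lcpArr_iff {SA : ℕ → ℕ} {k m : ℕ} (hm : m ≤ T.length) (hk : 0 < k) :
    m ≤ lcpArr T SA k ↔ (T.drop (SA (k - 1))).take m = (T.drop (SA k)).take m := by
  rw [lcpArr, if_neg hk.ne', le_lce_iff T hm]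

theorem le_lcpArr_iff_of_or {SA : ℕ → ℕ} {Q : List α} {k m : ℕ} (hm : m ≤ T.length)
    (hk : 0 < k)
    (hQ : (T.drop (SA (k - 1))).take m = Q ∨ (T.drop (SA k)).take m = Q) :
    m ≤ lcpArr T SA k ↔
      (T.drop (SA (k - 1))).take m = Q ∧ (T.drop (SA k)).take m = Q := by
  rw [le_lcpArr_iff T hm hk]
  constructor
  · intro heq
    rcases hQ with hQ | hQ
    · exact ⟨hQ, heq ▸ hQ⟩
    · exact ⟨heq ▸ hQ, hQ⟩
  · rintro ⟨h₁, h₂⟩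
    exact h₁.trans h₂.symm

theorem le_lcpArr_iff_of_occurrence_interval {SA : ℕ → ℕ} {Q : List α} {l r m : ℕ}
    (hm : 0 < m) (hmn : m ≤ T.length) (hlr : l ≤ r)
    (hocc : ∀ k, k < T.length → ((T.drop (SA k)).take m = Q ↔ l ≤ k ∧ k ≤ r))
    (k : ℕ) (hlk : l ≤ k) (hkr : k ≤ r + 1) (hkn : k < T.length) :
    m ≤ lcpArr T SA k ↔ l < k ∧ k ≤ r := by
  rcases Nat.eq_zero_or_pos k with rfl | hk
  · simp only [lcpArr, if_pos]
    omega
  rw [le_lcpArr_iff_of_or T hmn hk, hocc _ (by omega), hocc _ hkn]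
  · omega
  · rw [hocc _ (by omega), hocc _ hkn]
    omega

end Lcp

structure IsSuffixArray {α : Type*} [LinearOrder α] (T : List α) (SA ISA : ℕ → ℕ) : Prop where
  lt_length : ∀ k, k < T.length → SA k < T.length
  lex_lt : ∀ k l, k < l → l < T.length → List.Lex (· < ·) (T.drop (SA k)) (T.drop (SA l))
  isa : ∀ q, q < T.length → ISA q < T.length ∧ SA (ISA q) = q

namespace IsSuffixArray

variable {α : Type*} [LinearOrder α] {T : List α} {SA ISA : ℕ → ℕ}

theorem strictMonoOn (h : IsSuffixArray T SA ISA) :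
    StrictMonoOn (fun k => T.drop (SA k)) (Set.Iio T.length) :=
  -- `<` on `List α` is `List.Lex (· < ·)` by definition
  fun k _ l hl hkl => h.lex_lt k l hkl hl

theorem isa_sa (h : IsSuffixArray T SA ISA) {k : ℕ} (hk : k < T.length) : ISA (SA k) = k :=
  have hq := h.isa _ (h.lt_length k hk)
  h.strictMonoOn.injOn hq.1 hk (by simp only [hq.2])

theorem take_drop_eq_of_le_of_le (h : IsSuffixArray T SA ISA) {k₁ k k₂ m : ℕ}
    (h₁ : k₁ ≤ k) (h₂ : k ≤ k₂) (hk₂ : k₂ < T.length)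
    (heq : (T.drop (SA k₁)).take m = (T.drop (SA k₂)).take m) :
    (T.drop (SA k)).take m = (T.drop (SA k₁)).take m :=
  have hmono := h.strictMonoOn.monotoneOn
  le_antisymm
    (heq ▸ List.take_monotone m (hmono (h₂.trans_lt hk₂) hk₂ h₂))
    (List.take_monotone m (hmono ((h₁.trans h₂).trans_lt hk₂) (h₂.trans_lt hk₂) h₁))

theorem exists_occurrence_interval (h : IsSuffixArray T SA ISA) (Q : List α) (m : ℕ) {k₀ : ℕ}
    (hk₀ : k₀ < T.length) (hQ : (T.drop (SA k₀)).take m = Q) :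
    ∃ l r, r < T.length ∧
      ∀ k, k < T.length → ((T.drop (SA k)).take m = Q ↔ l ≤ k ∧ k ≤ r) := by
  classical
  set S := (Finset.range T.length).filter fun k => (T.drop (SA k)).take m = Q
  have hmem : ∀ k, k ∈ S ↔ k < T.length ∧ (T.drop (SA k)).take m = Q := by
    simp [S]
  have hS : S.Nonempty := ⟨k₀, (hmem k₀).2 ⟨hk₀, hQ⟩⟩
  obtain ⟨hrn, hr⟩ := (hmem _).1 (S.max'_mem hS)
  obtain ⟨-, hl⟩ := (hmem _).1 (S.min'_mem hS)
  refine ⟨S.min' hS, S.max' hS, hrn, fun k hk => ⟨fun hkQ => ?_, fun ⟨hlk, hkr⟩ => ?_⟩⟩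
  · exact ⟨S.min'_le k ((hmem k).2 ⟨hk, hkQ⟩), S.le_max' k ((hmem k).2 ⟨hk, hkQ⟩)⟩
  · exact (h.take_drop_eq_of_le_of_le hlk hkr hrn (hl.trans hr.symm)).trans hl

theorem plcp_sa (h : IsSuffixArray T SA ISA) {k : ℕ} (hk : k < T.length) :
    plcp T SA ISA (SA k) = lcpArr T SA k := by
  rw [plcp, h.isa_sa hk]

theorem iterate_phi (h : IsSuffixArray T SA ISA) {k : ℕ} (hk : k < T.length) (t : ℕ) :
    (phi SA ISA)^[t] (SA k) = SA (k - t) := by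
  induction t with
  | zero => rfl
  | succ t ih =>
    rw [Function.iterate_succ_apply', ih, phi, h.isa_sa (by omega), Nat.sub_sub]

theorem phiInv_sa (h : IsSuffixArray T SA ISA) {k : ℕ} (hk : k < T.length) :
    phiInv T SA ISA (SA k) = if k + 1 < T.length then SA (k + 1) else T.length := by
  rw [phiInv, h.isa_sa hk]

theorem iterate_phiInv (h : IsSuffixArray T SA ISA) {k t : ℕ} (hkt : k + t < T.length) :
    (phiInv T SA ISA)^[t] (SA k) = SA (k + t) := by
  induction t with
  | zero => rfl
  | succ t ih =>
    rw [Function.iterate_succ_apply', ih (by omega), h.phiInv_sa (by omega), if_pos (by omega)]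
    rfl

theorem forall_le_plcp_iterate_phi_iff (h : IsSuffixArray T SA ISA) {l r k₀ m : ℕ}
    (hrun : ∀ k, l ≤ k → k ≤ r + 1 → k < T.length → (m ≤ lcpArr T SA k ↔ l < k ∧ k ≤ r))
    (hlk₀ : l ≤ k₀) (hk₀r : k₀ ≤ r) (hrn : r < T.length) (t : ℕ) :
    (∀ u, u < t → m ≤ plcp T SA ISA ((phi SA ISA)^[u] (SA k₀))) ↔ t ≤ k₀ - l := by
  have hgood : ∀ u, u ≤ k₀ - l → (m ≤ plcp T SA ISA ((phi SA ISA)^[u] (SA k₀)) ↔ u < k₀ - l) := by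
    intro u hu
    rw [h.iterate_phi (by omega), h.plcp_sa (by omega), hrun _ (by omega) (by omega) (by omega)]
    omega
  constructor
  · intro hall
    by_contra! hlt
    exact lt_irrefl _ ((hgood _ le_rfl).1 (hall _ hlt))
  · intro ht u hu
    exact (hgood u (by omega)).2 (by omega)

theorem forall_iterate_phiInv_iff (h : IsSuffixArray T SA ISA) {l r k₀ m : ℕ}
    (hrun : ∀ k, l ≤ k → k ≤ r + 1 → k < T.length → (m ≤ lcpArr T SA k ↔ l < k ∧ k ≤ r))
    (hlk₀ : l ≤ k₀) (hk₀r : k₀ ≤ r) (hrn : r < T.length) (t : ℕ) :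
    (∀ u, 1 ≤ u → u ≤ t →
      (phiInv T SA ISA)^[u] (SA k₀) ≠ T.length ∧
        m ≤ plcp T SA ISA ((phiInv T SA ISA)^[u] (SA k₀))) ↔ k₀ + t ≤ r := by
  constructor
  · induction t with
    | zero => exact fun _ => hk₀r
    | succ t ih =>
      intro hall
      have ht : k₀ + t ≤ r := ih fun u hu hut => hall u hu (by omega)
      obtain ⟨hne, hle⟩ := hall (t + 1) (by omega) le_rfl
      rw [Function.iterate_succ_apply', h.iterate_phiInv (by omega), h.phiInv_sa (by omega)]
        at hne hle
      split_ifs at hne hle with hlt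
      · rw [h.plcp_sa hlt, hrun _ (by omega) (by omega) hlt] at hle
        omega
      · exact absurd rfl hne
  · intro ht u _ hut
    rw [h.iterate_phiInv (by omega), h.plcp_sa (by omega), hrun _ (by omega) (by omega) (by omega)]
    exact ⟨(h.lt_length _ (by omega)).ne, by omega, by omega⟩

end IsSuffixArray

theorem algorithm1_lists_all_occurrences_general {α : Type*} [LinearOrder α]
    (T P : List α) (SA ISA : ℕ → ℕ)
    (hSA : ∀ k, k < T.length → SA k < T.length)
    (hsorted : ∀ k l, k < l → l < T.length →
      List.Lex (· < ·) (T.drop (SA k)) (T.drop (SA l)))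
    (hISA : ∀ q, q < T.length → ISA q < T.length ∧ SA (ISA q) = q)
    (i j p : ℕ) (hjP : j < P.length)
    (hp : p < T.length)
    (hocc : (T.drop p).take (j - i + 1) = (P.drop i).take (j - i + 1)) :
    ∃ l r : ℕ,
      (∀ k, k < T.length →
        (((T.drop (SA k)).take (j - i + 1) = (P.drop i).take (j - i + 1)) ↔
          (l ≤ k ∧ k ≤ r))) ∧
      {x : ℕ |
          (∃ t : ℕ, x = (phi SA ISA)^[t] p ∧
            ∀ u, u < t → j - i + 1 ≤ plcp T SA ISA ((phi SA ISA)^[u] p)) ∨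
          (∃ t : ℕ, 1 ≤ t ∧ x = (phiInv T SA ISA)^[t] p ∧
            ∀ u, 1 ≤ u → u ≤ t →
              (phiInv T SA ISA)^[u] p ≠ T.length ∧
                j - i + 1 ≤ plcp T SA ISA ((phiInv T SA ISA)^[u] p))} =
        {x : ℕ | ∃ k, l ≤ k ∧ k ≤ r ∧ x = SA k} := by
  set m := j - i + 1
  have hT : IsSuffixArray T SA ISA := ⟨hSA, hsorted, hISA⟩
  obtain ⟨hk₀, hSAk₀⟩ := hISA p hp
  generalize ISA p = k₀ at hk₀ hSAk₀
  have hmn : m ≤ T.length := by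
    have := congrArg List.length hocc
    simp only [List.length_take, List.length_drop] at this
    omega
  rw [← hSAk₀] at hocc ⊢
  obtain ⟨l, r, hrn, hlr⟩ := hT.exists_occurrence_interval _ m hk₀ hocc
  obtain ⟨hlk₀, hk₀r⟩ := (hlr k₀ hk₀).1 hocc
  have hrun := le_lcpArr_iff_of_occurrence_interval T (by omega) hmn (hlk₀.trans hk₀r) hlr
  refine ⟨l, r, hlr, ?_⟩
  ext x
  simp only [Set.mem_ofPred_eq, hT.forall_le_plcp_iterate_phi_iff hrun hlk₀ hk₀r hrn,
    hT.forall_iterate_phiInv_iff hrun hlk₀ hk₀r hrn]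
  simp only [hT.iterate_phi hk₀]
  constructor
  · rintro (⟨t, rfl, ht⟩ | ⟨t, ht, rfl, htr⟩)
    · exact ⟨k₀ - t, by omega, by omega, rfl⟩
    · exact ⟨k₀ + t, by omega, htr, hT.iterate_phiInv (by omega)⟩
  · rintro ⟨k, hlk, hkr, rfl⟩
    rcases le_or_gt k k₀ with hkk₀ | hk₀k
    · exact Or.inl ⟨k₀ - k, by rw [Nat.sub_sub_self hkk₀], by omega⟩
    · exact Or.inr ⟨k - k₀, by omega, by rw [hT.iterate_phiInv (by omega)]; congr; omega,
        by omega⟩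

/-- correctness of occurrence listing via `φ`, `φ⁻¹` and
`PLCP`, i.e. of Algorithm 1: given one occurrence start `p` of `P[i..j]` in
`T`, the ranks of the suffixes having `P[i..j]` as a prefix form a contiguous
interval `[l, r]` of the suffix array, and the set of positions output by
Algorithm 1 — `p` and its `φ`-iterates taken while `PLCP ≥ j-i+1`, together
with the `φ⁻¹`-iterates taken while they are non-`NULL` and `PLCP ≥ j-i+1` —
is exactly `{SA[k] : l ≤ k ≤ r}`, the set of all occurrence starts. -/
theorem algorithm1_lists_all_occurrences {α : Type*} [LinearOrder α]
    (T P : List α) (SA ISA : ℕ → ℕ)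
    (hn : 0 < T.length)
    (hSA : ∀ k, k < T.length → SA k < T.length)
    (hsorted : ∀ k l, k < l → l < T.length →
      List.Lex (· < ·) (T.drop (SA k)) (T.drop (SA l)))
    (hISA : ∀ q, q < T.length → ISA q < T.length ∧ SA (ISA q) = q)
    (i j p : ℕ) (hij : i ≤ j) (hjP : j < P.length)
    (hp : p < T.length)
    (hocc : (T.drop p).take (j - i + 1) = (P.drop i).take (j - i + 1)) :
    ∃ l r : ℕ,
      (∀ k, k < T.length →
        (((T.drop (SA k)).take (j - i + 1) = (P.drop i).take (j - i + 1)) ↔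
          (l ≤ k ∧ k ≤ r))) ∧
      {x : ℕ |
          (∃ t : ℕ, x = (phi SA ISA)^[t] p ∧
            ∀ u, u < t → j - i + 1 ≤ plcp T SA ISA ((phi SA ISA)^[u] p)) ∨
          (∃ t : ℕ, 1 ≤ t ∧ x = (phiInv T SA ISA)^[t] p ∧
            ∀ u, 1 ≤ u → u ≤ t →
              (phiInv T SA ISA)^[u] p ≠ T.length ∧
                j - i + 1 ≤ plcp T SA ISA ((phiInv T SA ISA)^[u] p))} =
        {x : ℕ | ∃ k, l ≤ k ∧ k ≤ r ∧ x = SA k} :=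
  algorithm1_lists_all_occurrences_general T P SA ISA hSA hsorted hISA i j p hjP hp hocc
end

section
/- Backward search step correctness: if [l, r] is the suffix-array interval of a string W, then the suffix-array interval of cW equals [C[c] + rank_c(BWT, l−1), C[c] + rank_c(BWT, r) − 1], where rank_c(BWT, i) counts occurrences of c in BWT[0..i]. -/
/-- The Burrows-Wheeler transform: `bwt T SA i = T[SA[i] - 1]` (circularly). -/
def bwt {α : Type*} [Inhabited α] (T : List α) (SA : ℕ → ℕ) (i : ℕ) : α :=
  T[(SA i + T.length - 1) % T.length]!

/-- `cnt T c` = number of characters of `T` strictly smaller than `c`. -/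
def cnt {α : Type*} [LinearOrder α] [Inhabited α] (T : List α) (c : α) : ℕ :=
  ((Finset.range T.length).filter (fun j => T[j]! < c)).card

/-- `rankBWT T SA c i` = number of occurrences of `c` in `BWT[0..i-1]`,
i.e. `rank_c(BWT, i - 1)` in the inclusive convention of the paper. -/
def rankBWT {α : Type*} [LinearOrder α] [Inhabited α]
    (T : List α) (SA : ℕ → ℕ) (c : α) (i : ℕ) : ℕ :=
  ((Finset.range i).filter (fun j => bwt T SA j = c)).card

/-!
LF-mapping: if the suffix of rank `k` is `c` followed by the suffix of rank `j`, then
`k = C[c] + rank_c(BWT, j - 1)`. Indeed the suffixes below `c :: X` are those starting with a letter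
`< c` and those `c :: Y` with `Y < X`; through the suffix array the latter correspond to the ranks
`j' < j` with `BWT[j'] = c` (the sentinel rules out wrapping around). So the ranks of the suffixes
starting with `c :: W` are the values `C[c] + rank_c(BWT, j - 1)` for `j ∈ [l, r]` with
`BWT[j] = c`, and these values fill an interval because `rank_c` grows by one exactly at such `j`.
-/

open Finset

theorem Finset.range_filter_lt_of_le {n k : ℕ} (h : k ≤ n) : {x ∈ range n | x < k} = range k := by
  ext x
  simp only [mem_filter, mem_range]
  omega

theorem Nat.exists_count_eq_iff {p : ℕ → Prop} [DecidablePred p] {a b m : ℕ} :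
    (∃ j, a ≤ j ∧ j < b ∧ p j ∧ Nat.count p j = m) ↔
      Nat.count p a ≤ m ∧ m < Nat.count p b := by
  constructor
  · rintro ⟨j, haj, hjb, hpj, rfl⟩
    exact ⟨Nat.count_monotone p haj, Nat.count_strict_mono hpj hjb⟩
  · rintro ⟨ha, hb⟩
    have hm : ∀ hf : (Set.ofPred p).Finite, m < #hf.toFinset :=
      fun hf => hb.trans_le (Nat.count_le_card hf b)
    refine ⟨Nat.nth p m, ?_, Nat.nth_lt_of_lt_count hb, Nat.nth_mem m hm, Nat.count_nth hm⟩
    by_contra! hlt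
    exact (Nat.count_nth hm ▸ Nat.count_strict_mono (Nat.nth_mem m hm) hlt).not_ge ha

section SuffixArray

variable {α : Type*}

section Text

variable [Inhabited α] {T : List α}

theorem drop_eq_getElem!_cons {p : ℕ} (hp : p < T.length) :
    T.drop p = T[p]! :: T.drop (p + 1) := by
  rw [List.drop_eq_getElem_cons hp, getElem!_pos T p hp]

theorem cons_prefix_drop_iff {p : ℕ} (hp : p < T.length) {c : α} {W : List α} :
    c :: W <+: T.drop p ↔ T[p]! = c ∧ W <+: T.drop (p + 1) := by
  rw [drop_eq_getElem!_cons hp, List.cons_prefix_cons, eq_comm]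

theorem getElem!_add_length_sub_one_mod_eq_iff {c : α}
    (hc : T[T.length - 1]! ≠ c) {q : ℕ} (hq : q < T.length) :
    T[(q + T.length - 1) % T.length]! = c ↔ ∃ p, p + 1 = q ∧ T[p]! = c := by
  rcases q with _ | p
  · rw [Nat.zero_add, Nat.mod_eq_of_lt (by omega)]
    exact iff_of_false hc (by rintro ⟨p, hp, -⟩; omega)
  · rw [show p + 1 + T.length - 1 = p + T.length by omega, Nat.add_mod_right,
      Nat.mod_eq_of_lt (by omega)]
    simp

theorem bwt_eq_iff_exists {SA : ℕ → ℕ} {c : α} (hc : T[T.length - 1]! ≠ c) {j : ℕ}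
    (hj : SA j < T.length) : bwt T SA j = c ↔ ∃ p, p + 1 = SA j ∧ T[p]! = c :=
  getElem!_add_length_sub_one_mod_eq_iff hc hj

end Text

section Order

variable [LinearOrder α] [Inhabited α] {T : List α}

theorem drop_lt_cons_iff {p : ℕ} (hp : p < T.length) {c : α} {X : List α} :
    T.drop p < c :: X ↔ T[p]! < c ∨ T[p]! = c ∧ T.drop (p + 1) < X := by
  rw [drop_eq_getElem!_cons hp]
  exact List.cons_lt_cons_iff

theorem card_drop_lt_cons (c : α) (X : List α) :
    #{p ∈ range T.length | T.drop p < c :: X} =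
      cnt T c + #{p ∈ range T.length | T[p]! = c ∧ T.drop (p + 1) < X} := by
  rw [cnt, ← card_union_of_disjoint, ← filter_or]
  · exact congrArg card (filter_congr fun p hp => drop_lt_cons_iff (mem_range.1 hp))
  · exact disjoint_filter.2 fun p _ hlt heq => hlt.ne heq.1

theorem card_filter_getElem!_add_length_sub_one_mod {c : α} (hc : T[T.length - 1]! ≠ c)
    (Q : ℕ → Prop) [DecidablePred Q] :
    #{q ∈ range T.length | Q q ∧ T[(q + T.length - 1) % T.length]! = c} =
      #{p ∈ range T.length | T[p]! = c ∧ Q (p + 1)} := by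
  refine card_nbij' (· - 1) (· + 1) ?_ ?_ ?_ ?_
  · intro q hq
    simp only [coe_filter, mem_range, Set.mem_ofPred_eq] at hq ⊢
    obtain ⟨hq, hQ, hprev⟩ := hq
    obtain ⟨p, rfl, hp⟩ := (getElem!_add_length_sub_one_mod_eq_iff hc hq).1 hprev
    exact ⟨by omega, hp, hQ⟩
  · intro p hp
    simp only [coe_filter, mem_range, Set.mem_ofPred_eq] at hp ⊢
    obtain ⟨hp, hpc, hQ⟩ := hp
    have hlast : p ≠ T.length - 1 := by rintro rfl; exact hc hpc
    exact ⟨by omega, hQ, (getElem!_add_length_sub_one_mod_eq_iff hc (by omega)).2 ⟨p, rfl, hpc⟩⟩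
  · intro q hq
    simp only [coe_filter, mem_range, Set.mem_ofPred_eq] at hq
    obtain ⟨hq, -, hprev⟩ := hq
    obtain ⟨p, rfl, -⟩ := (getElem!_add_length_sub_one_mod_eq_iff hc hq).1 hprev
    rfl
  · intro p _
    simp

theorem cnt_pos {c : α} {i : ℕ} (hi : i < T.length) (h : T[i]! < c) : 0 < cnt T c :=
  card_pos.2 ⟨i, mem_filter.2 ⟨mem_range.2 hi, h⟩⟩

theorem rankBWT_eq_count (SA : ℕ → ℕ) (c : α) :
    rankBWT T SA c = Nat.count (fun j => bwt T SA j = c) :=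
  funext fun i => (Nat.count_eq_card_filter_range _ i).symm

end Order

structure IsSuffixArray_s17 [LinearOrder α] (T : List α) (SA : ℕ → ℕ) : Prop where
  mapsTo : Set.MapsTo SA (Set.Iio T.length) (Set.Iio T.length)
  strictMonoOn : StrictMonoOn (fun k => T.drop (SA k)) (Set.Iio T.length)

namespace IsSuffixArray_s17

variable [LinearOrder α] {T : List α} {SA : ℕ → ℕ}

theorem injOn (h : IsSuffixArray_s17 T SA) : Set.InjOn SA (Set.Iio T.length) :=
  fun _ hk _ hk' heq => h.strictMonoOn.injOn hk hk' (congrArg T.drop heq)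

theorem bijOn (h : IsSuffixArray_s17 T SA) : Set.BijOn SA (Set.Iio T.length) (Set.Iio T.length) :=
  ((Set.finite_Iio _).injOn_iff_bijOn_of_mapsTo h.mapsTo).1 h.injOn

theorem drop_lt_drop_iff (h : IsSuffixArray_s17 T SA) {k k' : ℕ} (hk : k < T.length)
    (hk' : k' < T.length) : T.drop (SA k) < T.drop (SA k') ↔ k < k' :=
  h.strictMonoOn.lt_iff_lt hk hk'

theorem card_filter_comp (h : IsSuffixArray_s17 T SA) (P : ℕ → Prop) [DecidablePred P] :
    #{k ∈ range T.length | P (SA k)} = #{p ∈ range T.length | P p} := by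
  refine card_nbij SA (fun k hk => ?_) (h.injOn.mono fun k hk => ?_) (fun p hp => ?_)
  · simp only [coe_filter, mem_range, Set.mem_ofPred_eq] at hk ⊢
    exact ⟨h.mapsTo hk.1, hk.2⟩
  · simp only [coe_filter, mem_range, Set.mem_ofPred_eq] at hk
    exact hk.1
  · simp only [coe_filter, mem_range, Set.mem_ofPred_eq] at hp
    obtain ⟨k, hk, rfl⟩ := h.bijOn.surjOn hp.1
    exact ⟨k, by simpa using ⟨hk, hp.2⟩, rfl⟩

theorem card_drop_lt_drop (h : IsSuffixArray_s17 T SA) {k : ℕ} (hk : k < T.length) :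
    #{p ∈ range T.length | T.drop p < T.drop (SA k)} = k :=
  calc _ = #{k' ∈ range T.length | T.drop (SA k') < T.drop (SA k)} :=
        (h.card_filter_comp _).symm
    _ = #{k' ∈ range T.length | k' < k} :=
      congrArg card (filter_congr fun k' hk' => h.drop_lt_drop_iff (mem_range.1 hk') hk)
    _ = k := by rw [range_filter_lt_of_le hk.le, card_range]

variable [Inhabited α]

theorem rankBWT_eq_card (h : IsSuffixArray_s17 T SA) {c : α} (hc : T[T.length - 1]! ≠ c) {j : ℕ}
    (hj : j < T.length) :
    rankBWT T SA c j = #{p ∈ range T.length | T[p]! = c ∧ T.drop (p + 1) < T.drop (SA j)} := by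
  rw [← card_filter_getElem!_add_length_sub_one_mod hc (fun q => T.drop q < T.drop (SA j)),
    ← h.card_filter_comp, rankBWT, ← range_filter_lt_of_le hj.le, filter_filter]
  exact congrArg card <| filter_congr fun k hk =>
    and_congr (h.drop_lt_drop_iff (mem_range.1 hk) hj).symm Iff.rfl

theorem eq_cnt_add_rankBWT (h : IsSuffixArray_s17 T SA) {c : α} (hc : T[T.length - 1]! ≠ c)
    {k j : ℕ} (hk : k < T.length) (hj : j < T.length) (hkj : SA k + 1 = SA j)
    (hck : T[SA k]! = c) : k = cnt T c + rankBWT T SA c j := by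
  rw [h.rankBWT_eq_card hc hj, ← card_drop_lt_cons, ← hkj, ← hck,
    ← drop_eq_getElem!_cons (h.mapsTo hk), h.card_drop_lt_drop hk]

theorem cons_prefix_drop_iff_exists (h : IsSuffixArray_s17 T SA) {c : α}
    (hc : T[T.length - 1]! ≠ c) (W : List α) {k : ℕ} (hk : k < T.length) :
    c :: W <+: T.drop (SA k) ↔ ∃ j < T.length,
      bwt T SA j = c ∧ W <+: T.drop (SA j) ∧ k = cnt T c + rankBWT T SA c j := by
  rw [cons_prefix_drop_iff (h.mapsTo hk)]
  constructor
  · rintro ⟨hck, hWk⟩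
    have hlast : SA k ≠ T.length - 1 := by rintro hl; exact hc (hl ▸ hck)
    have hSAk : SA k < T.length := h.mapsTo hk
    obtain ⟨j, hj, hkj⟩ := h.bijOn.surjOn (show SA k + 1 < T.length by omega)
    exact ⟨j, hj, (bwt_eq_iff_exists hc (h.mapsTo hj)).2 ⟨SA k, hkj.symm, hck⟩, hkj ▸ hWk,
      h.eq_cnt_add_rankBWT hc hk hj hkj.symm hck⟩
  · rintro ⟨j, hj, hbwt, hWj, rfl⟩
    have hSAj : SA j < T.length := h.mapsTo hj
    obtain ⟨p, hpj, hpc⟩ := (bwt_eq_iff_exists hc hSAj).1 hbwt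
    obtain ⟨k, hk, rfl⟩ := h.bijOn.surjOn (show p < T.length by omega)
    rw [← h.eq_cnt_add_rankBWT hc hk hj hpj hpc]
    exact ⟨hpc, hpj ▸ hWj⟩

end IsSuffixArray_s17

end SuffixArray

theorem backward_search_step_general {α : Type*} [LinearOrder α] [Inhabited α]
    (T : List α) (SA : ℕ → ℕ) (W : List α) (c : α) (l r : ℕ)
    (hSA : ∀ k, k < T.length → SA k < T.length)
    (hsorted : ∀ k l', k < l' → l' < T.length →
      List.Lex (· < ·) (T.drop (SA k)) (T.drop (SA l')))
    (hc : T[T.length - 1]! < c)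
    (hr : r < T.length)
    (hW : ∀ k, k < T.length → ((W <+: T.drop (SA k)) ↔ (l ≤ k ∧ k ≤ r))) :
    ∀ k, k < T.length →
      (((c :: W) <+: T.drop (SA k)) ↔
        (cnt T c + rankBWT T SA c l ≤ k ∧
          k ≤ cnt T c + rankBWT T SA c (r + 1) - 1)) := by
  have hsa : IsSuffixArray_s17 T SA :=
    ⟨fun k hk => hSA k hk, fun k _ k' hk' hkk' => hsorted k k' hkk' hk'⟩
  have hcnt : 0 < cnt T c := cnt_pos (by omega) hc
  intro k hk
  have hrange := Nat.exists_count_eq_iff (p := fun j => bwt T SA j = c) (a := l) (b := r + 1)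
    (m := k - cnt T c)
  rw [hsa.cons_prefix_drop_iff_exists hc.ne W hk]
  simp only [rankBWT_eq_count] at hrange ⊢
  constructor
  · rintro ⟨j, hj, hbwt, hWj, rfl⟩
    obtain ⟨hlj, hjr⟩ := (hW j hj).1 hWj
    have := hrange.1 ⟨j, hlj, by omega, hbwt, by omega⟩
    omega
  · rintro ⟨hlk, hkr⟩
    obtain ⟨j, hlj, hjr, hbwt, hjk⟩ := hrange.2 ⟨by omega, by omega⟩
    exact ⟨j, by omega, hbwt, (hW j (by omega)).2 ⟨hlj, by omega⟩, by omega⟩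

/-- backward search step: if `[l, r]` is the suffix-array
interval of a string `W`, then the suffix-array interval of `c·W` is
`[C[c] + rank_c(BWT, l-1), C[c] + rank_c(BWT, r) - 1]` (here
`rankBWT T SA c l = rank_c(BWT, l-1)` and `rankBWT T SA c (r+1) =
rank_c(BWT, r)`, with ranks counting occurrences inclusively). -/
theorem backward_search_step {α : Type*} [LinearOrder α] [Inhabited α]
    (T : List α) (SA : ℕ → ℕ) (W : List α) (c : α) (l r : ℕ)
    (hn : 0 < T.length)
    (hSA : ∀ k, k < T.length → SA k < T.length)
    (hsorted : ∀ k l', k < l' → l' < T.length →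
      List.Lex (· < ·) (T.drop (SA k)) (T.drop (SA l')))
    (hsent : ∀ k, k < T.length - 1 → T[T.length - 1]! < T[k]!)
    (hc : T[T.length - 1]! < c)
    (hr : r < T.length)
    (hW : ∀ k, k < T.length → ((W <+: T.drop (SA k)) ↔ (l ≤ k ∧ k ≤ r))) :
    ∀ k, k < T.length →
      (((c :: W) <+: T.drop (SA k)) ↔
        (cnt T c + rankBWT T SA c l ≤ k ∧
          k ≤ cnt T c + rankBWT T SA c (r + 1) - 1)) :=
  backward_search_step_general T SA W c l r hSA hsorted hc hr hW
end
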